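/- With notation as above, the map K → Z × V'' sending ψ to (the a_1-coordinate of ψ(b_1) − b_1, ψ(b_1) − b_1 reduced appropriately) is a group isomorphism onto the Heisenberg-type group with multiplication (n_1, w_1)·(n_2, w_2) = (n_1 + n_2 + i(w_1, w_2), w_1 + w_2), where V'' = ⟨a_2, b_2, …, a_g, b_g⟩ ≅ Z^{2g−2}. -/
import Mathlib


/-- The standard symplectic form on `ℤ^{2g}`, with `i(a_j, b_j) = 1`. -/
def sform (g : ℕ) (x y : (Fin g ⊕ Fin g) → ℤ) : ℤ :=
  ∑ j : Fin g, (x (Sum.inl j) * y (Sum.inr j) - x (Sum.inr j) * y (Sum.inl j))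

/-- The standard basis vectors of `ℤ^{2g}`: `sbasis g (.inl j) = a_j`,
`sbasis g (.inr j) = b_j`. -/
def sbasis (g : ℕ) (v : Fin g ⊕ Fin g) : (Fin g ⊕ Fin g) → ℤ := Pi.single v 1

/-- The submodule `W = ⟨a₁, a₂, b₂, …, a_g, b_g⟩` (all basis vectors except `b₁`). -/
def Wsub (g : ℕ) [NeZero g] : Submodule ℤ ((Fin g ⊕ Fin g) → ℤ) :=
  Submodule.span ℤ ((Set.range fun j : Fin g => sbasis g (Sum.inl j)) ∪
    {x | ∃ j : Fin g, j ≠ 0 ∧ x = sbasis g (Sum.inr j)})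

/-- The subgroup `K ≤ Sp_{2g}(ℤ)` of elements fixing `a₁` and inducing the identity on
`⟨a₁, a₂, b₂, …⟩/⟨a₁⟩`, as a subset of the automorphisms of `ℤ^{2g}`. -/
def KsetSp (g : ℕ) [NeZero g] :
    Set (((Fin g ⊕ Fin g) → ℤ) ≃ₗ[ℤ] ((Fin g ⊕ Fin g) → ℤ)) :=
  {ψ | (∀ x y, sform g (ψ x) (ψ y) = sform g x y) ∧
    ψ (sbasis g (Sum.inl 0)) = sbasis g (Sum.inl 0) ∧
    ∀ x ∈ Wsub g, ψ x - x ∈ Submodule.span ℤ {sbasis g (Sum.inl 0)}}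

/-- The projection of a vector to `V'' = ⟨a₂, b₂, …, a_g, b_g⟩`, killing the `a₁` and `b₁`
coordinates. -/
def projV (g : ℕ) [NeZero g] (w : (Fin g ⊕ Fin g) → ℤ) : (Fin g ⊕ Fin g) → ℤ :=
  fun v => if v = Sum.inl 0 ∨ v = Sum.inr 0 then 0 else w v


lemma sform_add_left (g) (x y z) : sform g (x + y) z = sform g x z + sform g y z := by
  simp only [sform, Pi.add_apply]; rw [← Finset.sum_add_distrib]
  exact Finset.sum_congr rfl fun _ _ => by ring

lemma sform_add_right (g) (x y z) : sform g x (y + z) = sform g x y + sform g x z := by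
  simp only [sform, Pi.add_apply]; rw [← Finset.sum_add_distrib]
  exact Finset.sum_congr rfl fun _ _ => by ring

lemma sform_smul_left (g) (c : ℤ) (x y) : sform g (c • x) y = c * sform g x y := by
  simp only [sform, Pi.smul_apply, smul_eq_mul]; rw [Finset.mul_sum]
  exact Finset.sum_congr rfl fun _ _ => by ring

lemma sform_smul_right (g) (c : ℤ) (x y) : sform g x (c • y) = c * sform g x y := by
  simp only [sform, Pi.smul_apply, smul_eq_mul]; rw [Finset.mul_sum]
  exact Finset.sum_congr rfl fun _ _ => by ring

lemma sform_self (g) (x) : sform g x x = 0 := by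
  simp [sform, mul_comm]

lemma sform_comm (g) (x y) : sform g x y = -sform g y x := by
  simp only [sform]; rw [← Finset.sum_neg_distrib]
  exact Finset.sum_congr rfl fun _ _ => by ring

lemma sform_zero_left (g) (y) : sform g 0 y = 0 := by simp [sform]
lemma sform_zero_right (g) (x) : sform g x 0 = 0 := by simp [sform]

lemma sform_basis_right_inl (g) (x) (j : Fin g) :
    sform g x (sbasis g (Sum.inl j)) = -x (Sum.inr j) := by
  simp [sform, sbasis, Pi.single_apply]

lemma sform_basis_right_inr (g) (x) (j : Fin g) :
    sform g x (sbasis g (Sum.inr j)) = x (Sum.inl j) := by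
  simp [sform, sbasis, Pi.single_apply]

lemma sform_basis_left_inl (g) (x) (j : Fin g) :
    sform g (sbasis g (Sum.inl j)) x = x (Sum.inr j) := by
  simp [sform, sbasis, Pi.single_apply]

lemma sform_basis_left_inr (g) (x) (j : Fin g) :
    sform g (sbasis g (Sum.inr j)) x = -x (Sum.inl j) := by
  simp [sform, sbasis, Pi.single_apply]

/-- The candidate automorphism attached to `(n, w)`. -/
def PsiFun (g : ℕ) [NeZero g] (n : ℤ) (w : (Fin g ⊕ Fin g) → ℤ)
    (x : (Fin g ⊕ Fin g) → ℤ) : (Fin g ⊕ Fin g) → ℤ :=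
  x + x (Sum.inr 0) • (n • sbasis g (Sum.inl 0) + w) + sform g w x • sbasis g (Sum.inl 0)

def PsiLin (g : ℕ) [NeZero g] (n : ℤ) (w : (Fin g ⊕ Fin g) → ℤ) :
    ((Fin g ⊕ Fin g) → ℤ) →ₗ[ℤ] ((Fin g ⊕ Fin g) → ℤ) where
  toFun := PsiFun g n w
  map_add' x y := by
    funext u
    simp only [PsiFun, sform_add_right, Pi.add_apply, Pi.smul_apply, smul_eq_mul]
    ring
  map_smul' c x := by
    funext u
    simp only [PsiFun, sform_smul_right, Pi.add_apply, Pi.smul_apply, smul_eq_mul,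
      RingHom.id_apply]
    ring

lemma sform_a0_right (g : ℕ) [NeZero g] (x) :
    sform g x (sbasis g (Sum.inl 0)) = -x (Sum.inr 0) := sform_basis_right_inl g x 0

lemma sbasis_a0_apply (g : ℕ) [NeZero g] (u) :
    sbasis g (Sum.inl (0 : Fin g)) u = if u = Sum.inl 0 then 1 else 0 := by
  simp [sbasis, Pi.single_apply]

lemma sbasis_a0_b0 (g : ℕ) [NeZero g] :
    sbasis g (Sum.inl (0 : Fin g)) (Sum.inr 0) = 0 := by
  simp [sbasis]

lemma PsiLin_comp (g : ℕ) [NeZero g] (n₁ n₂ : ℤ) (w₁ w₂ : (Fin g ⊕ Fin g) → ℤ)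
    (h₁ : w₁ (Sum.inr 0) = 0) (h₂ : w₂ (Sum.inr 0) = 0) (x : (Fin g ⊕ Fin g) → ℤ) :
    PsiFun g n₁ w₁ (PsiFun g n₂ w₂ x)
      = PsiFun g (n₁ + n₂ + sform g w₁ w₂) (w₁ + w₂) x := by
  funext u
  simp only [PsiFun, sform_add_left, sform_add_right, sform_smul_right, sform_a0_right,
    sbasis_a0_b0, h₁, h₂, Pi.add_apply, Pi.smul_apply, smul_eq_mul]
  ring

lemma PsiFun_symplectic (g : ℕ) [NeZero g] (n : ℤ) (w : (Fin g ⊕ Fin g) → ℤ)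
    (h1 : w (Sum.inl 0) = 0) (h2 : w (Sum.inr 0) = 0) (x y : (Fin g ⊕ Fin g) → ℤ) :
    sform g (PsiFun g n w x) (PsiFun g n w y) = sform g x y := by
  have hxw : sform g x w = -sform g w x := by rw [sform_comm]
  have haw : sform g (sbasis g (Sum.inl (0 : Fin g))) w = w (Sum.inr 0) :=
    sform_basis_left_inl g w 0
  have hwa : sform g w (sbasis g (Sum.inl (0 : Fin g))) = -w (Sum.inr 0) :=
    sform_a0_right g w
  have hay : ∀ z, sform g (sbasis g (Sum.inl (0 : Fin g))) z = z (Sum.inr 0) :=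
    fun z => sform_basis_left_inl g z 0
  simp only [PsiFun, sform_add_left, sform_add_right, sform_smul_left, sform_smul_right,
    sform_a0_right, hay, hxw, haw, hwa, sform_self, h2, sbasis_a0_b0,
    Pi.add_apply, Pi.smul_apply, smul_eq_mul]
  ring

lemma sform_neg_right (g) (x y) : sform g x (-y) = -sform g x y := by
  have : -y = (-1 : ℤ) • y := by funext u; simp
  rw [this, sform_smul_right]; ring

lemma PsiFun_zero (g : ℕ) [NeZero g] (x) : PsiFun g 0 0 x = x := by
  funext u
  simp [PsiFun, sform_zero_left]

/-- The automorphism attached to `(n, w)`, for `w ∈ V''`. -/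
def Psi (g : ℕ) [NeZero g] (n : ℤ) (w : (Fin g ⊕ Fin g) → ℤ)
    (h1 : w (Sum.inl 0) = 0) (h2 : w (Sum.inr 0) = 0) :
    ((Fin g ⊕ Fin g) → ℤ) ≃ₗ[ℤ] ((Fin g ⊕ Fin g) → ℤ) :=
  LinearEquiv.ofLinear (PsiLin g n w) (PsiLin g (-n) (-w))
    (by
      apply LinearMap.ext; intro x
      have h := PsiLin_comp g n (-n) w (-w) h2 (by simp [h2]) x
      simp only [LinearMap.comp_apply, LinearMap.id_apply]
      show PsiFun g n w (PsiFun g (-n) (-w) x) = x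
      rw [h, sform_neg_right, sform_self]
      simpa using PsiFun_zero g x)
    (by
      apply LinearMap.ext; intro x
      have h := PsiLin_comp g (-n) n (-w) w (by simp [h2]) h2 x
      simp only [LinearMap.comp_apply, LinearMap.id_apply]
      show PsiFun g (-n) (-w) (PsiFun g n w x) = x
      rw [h, sform_comm, sform_neg_right, sform_self]
      simpa using PsiFun_zero g x)

lemma Psi_apply (g : ℕ) [NeZero g] (n w h1 h2 x) :
    Psi g n w h1 h2 x = PsiFun g n w x := rfl

lemma Psi_mul (g : ℕ) [NeZero g] (n₁ w₁ h11 h12 n₂ w₂ h21 h22) :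
    Psi g n₁ w₁ h11 h12 * Psi g n₂ w₂ h21 h22
      = Psi g (n₁ + n₂ + sform g w₁ w₂) (w₁ + w₂)
          (by simp [h11, h21]) (by simp [h12, h22]) := by
  apply LinearEquiv.ext
  intro x
  show PsiFun g n₁ w₁ (PsiFun g n₂ w₂ x) = PsiFun g (n₁ + n₂ + sform g w₁ w₂) (w₁ + w₂) x
  exact PsiLin_comp g n₁ n₂ w₁ w₂ h12 h22 x

lemma Psi_one (g : ℕ) [NeZero g] : Psi g 0 0 rfl rfl = 1 := by
  apply LinearEquiv.ext
  intro x
  exact PsiFun_zero g x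

lemma mem_Wsub_b0 (g : ℕ) [NeZero g] {x} (hx : x ∈ Wsub g) : x (Sum.inr 0) = 0 := by
  have hle : Wsub g ≤ LinearMap.ker (LinearMap.proj (R := ℤ) (φ := fun _ : Fin g ⊕ Fin g => ℤ)
      (Sum.inr (0 : Fin g))) := by
    rw [Wsub, Submodule.span_le]
    rintro y (⟨j, rfl⟩ | ⟨j, hj, rfl⟩)
    · simp [sbasis, LinearMap.mem_ker, Pi.single_apply]
    · simp [sbasis, LinearMap.mem_ker, Pi.single_apply, Ne.symm hj]
  exact hle hx

lemma PsiFun_a0 (g : ℕ) [NeZero g] (n w) (h2 : w (Sum.inr 0) = 0) :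
    PsiFun g n w (sbasis g (Sum.inl 0)) = sbasis g (Sum.inl 0) := by
  funext u
  simp [PsiFun, sbasis_a0_b0, sform_a0_right, h2]

lemma Psi_mem (g : ℕ) [NeZero g] (n w h1 h2) : Psi g n w h1 h2 ∈ KsetSp g := by
  refine ⟨fun x y => PsiFun_symplectic g n w h1 h2 x y, PsiFun_a0 g n w h2, ?_⟩
  intro x hx
  have hx0 : x (Sum.inr 0) = 0 := mem_Wsub_b0 g hx
  rw [Submodule.mem_span_singleton]
  refine ⟨sform g w x, ?_⟩
  show _ = PsiFun g n w x - x
  funext u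
  simp [PsiFun, hx0]

lemma projV_spec1 (g : ℕ) [NeZero g] (v) : projV g v (Sum.inl 0) = 0 := by simp [projV]
lemma projV_spec2 (g : ℕ) [NeZero g] (v) : projV g v (Sum.inr 0) = 0 := by simp [projV]

lemma K_eq_Psi (g : ℕ) [NeZero g] (ψ : ((Fin g ⊕ Fin g) → ℤ) ≃ₗ[ℤ] ((Fin g ⊕ Fin g) → ℤ))
    (hψ : ψ ∈ KsetSp g) :
    ψ = Psi g ((ψ (sbasis g (Sum.inr 0)) - sbasis g (Sum.inr 0)) (Sum.inl 0))
      (projV g (ψ (sbasis g (Sum.inr 0)) - sbasis g (Sum.inr 0)))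
      (projV_spec1 g _) (projV_spec2 g _) := by
  obtain ⟨hsymp, ha0, hW⟩ := hψ
  set n : ℤ := (ψ (sbasis g (Sum.inr 0)) - sbasis g (Sum.inr 0)) (Sum.inl 0) with hn
  set w : (Fin g ⊕ Fin g) → ℤ := projV g (ψ (sbasis g (Sum.inr 0)) - sbasis g (Sum.inr 0))
    with hwdef
  have hB0 : ψ (sbasis g (Sum.inr 0)) (Sum.inr 0) = 1 := by
    have h := hsymp (sbasis g (Sum.inl 0)) (sbasis g (Sum.inr 0))
    rw [ha0, sform_basis_left_inl, sform_basis_left_inl] at h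
    simpa [sbasis] using h
  have hw_inl : ∀ j : Fin g, j ≠ 0 → w (Sum.inl j) = ψ (sbasis g (Sum.inr 0)) (Sum.inl j) := by
    intro j hj
    simp [hwdef, projV, hj, sbasis, Pi.single_apply]
  have hw_inr : ∀ j : Fin g, j ≠ 0 → w (Sum.inr j) = ψ (sbasis g (Sum.inr 0)) (Sum.inr j) := by
    intro j hj
    simp [hwdef, projV, hj, sbasis, Pi.single_apply]
  have key : ∀ v, ψ (sbasis g v) = PsiFun g n w (sbasis g v) := by
    intro v
    rcases v with j | j
    · by_cases hj : j = 0
      · subst hj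
        rw [ha0, PsiFun_a0 g n w (projV_spec2 g _)]
      · -- ψ a_j = a_j + c • a₀ with c = -B (inr j)
        have hmem : sbasis g (Sum.inl j) ∈ Wsub g :=
          Submodule.subset_span (Or.inl ⟨j, rfl⟩)
        obtain ⟨c, hc⟩ := Submodule.mem_span_singleton.1 (hW _ hmem)
        have hψa : ψ (sbasis g (Sum.inl j)) = sbasis g (Sum.inl j) + c • sbasis g (Sum.inl 0) := by
          rw [hc]; abel
        have h := hsymp (sbasis g (Sum.inl j)) (sbasis g (Sum.inr 0))
        rw [hψa, sform_add_left, sform_smul_left, sform_basis_left_inl,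
          sform_basis_left_inl, hB0] at h
        have hc' : c = -(ψ (sbasis g (Sum.inr 0)) (Sum.inr j)) := by
          have : sform g (sbasis g (Sum.inl j)) (sbasis g (Sum.inr 0)) = 0 := by
            rw [sform_basis_left_inl]
            simp [sbasis, Pi.single_apply, hj]
          rw [this] at h
          linarith
        rw [hψa, hc', ← hw_inr j hj]
        funext u
        simp only [PsiFun, Pi.add_apply, Pi.smul_apply, smul_eq_mul, sform_basis_right_inl]
        have : sbasis g (Sum.inl j) (Sum.inr (0 : Fin g)) = 0 := by simp [sbasis]
        rw [this]
        ring
    · by_cases hj : j = 0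
      · subst hj
        -- ψ b₀ = b₀ + n • a₀ + w
        have hsb0 : sform g w (sbasis g (Sum.inr 0)) = 0 := by
          rw [sform_basis_right_inr]
          exact projV_spec1 g _
        funext u
        have hb1 : sbasis g (Sum.inr (0 : Fin g)) (Sum.inr (0 : Fin g)) = 1 := by simp [sbasis]
        simp only [PsiFun, hsb0, Pi.add_apply, Pi.smul_apply, smul_eq_mul, hb1, zero_mul,
          one_mul, add_zero]
        rcases u with k | k
        · by_cases hk : k = 0
          · subst hk
            simp only [hn, Pi.sub_apply]
            have h1 : sbasis g (Sum.inr (0 : Fin g)) (Sum.inl (0 : Fin g)) = 0 := by simp [sbasis]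
            have h2 : sbasis g (Sum.inl (0 : Fin g)) (Sum.inl (0 : Fin g)) = 1 := by simp [sbasis]
            have h3 : w (Sum.inl (0 : Fin g)) = 0 := projV_spec1 g _
            rw [h1, h2, h3]
            ring
          · have h1 : sbasis g (Sum.inr (0 : Fin g)) (Sum.inl k) = 0 := by simp [sbasis]
            have h2 : sbasis g (Sum.inl (0 : Fin g)) (Sum.inl k) = 0 := by
              simp [sbasis, Pi.single_apply, hk]
            rw [h1, h2, hw_inl k hk]
            ring
        · by_cases hk : k = 0
          · subst hk
            have h2 : sbasis g (Sum.inl (0 : Fin g)) (Sum.inr (0 : Fin g)) = 0 := by simp [sbasis]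
            have h3 : w (Sum.inr (0 : Fin g)) = 0 := projV_spec2 g _
            rw [hB0, hb1, h2, h3]
            ring
          · have h1 : sbasis g (Sum.inr (0 : Fin g)) (Sum.inr k) = 0 := by
              simp [sbasis, Pi.single_apply, hk]
            have h2 : sbasis g (Sum.inl (0 : Fin g)) (Sum.inr k) = 0 := by simp [sbasis]
            rw [h1, h2, hw_inr k hk]
            ring
      · -- ψ b_j = b_j + d • a₀ with d = B (inl j)
        have hmem : sbasis g (Sum.inr j) ∈ Wsub g :=
          Submodule.subset_span (Or.inr ⟨j, hj, rfl⟩)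
        obtain ⟨d, hd⟩ := Submodule.mem_span_singleton.1 (hW _ hmem)
        have hψb : ψ (sbasis g (Sum.inr j)) = sbasis g (Sum.inr j) + d • sbasis g (Sum.inl 0) := by
          rw [hd]; abel
        have h := hsymp (sbasis g (Sum.inr j)) (sbasis g (Sum.inr 0))
        rw [hψb, sform_add_left, sform_smul_left, sform_basis_left_inr,
          sform_basis_left_inl, sform_basis_left_inr, hB0] at h
        have hd' : d = ψ (sbasis g (Sum.inr 0)) (Sum.inl j) := by
          have : sbasis g (Sum.inr (0 : Fin g)) (Sum.inl j) = 0 := by simp [sbasis]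
          rw [this] at h
          linarith
        rw [hψb, hd', ← hw_inl j hj]
        funext u
        simp only [PsiFun, Pi.add_apply, Pi.smul_apply, smul_eq_mul, sform_basis_right_inr]
        have : sbasis g (Sum.inr j) (Sum.inr (0 : Fin g)) = 0 := by
          simp [sbasis, Pi.single_apply, hj]
        rw [this]
        ring
  apply LinearEquiv.toLinearMap_injective
  apply Module.Basis.ext (Pi.basisFun ℤ (Fin g ⊕ Fin g))
  intro v
  have hb : (Pi.basisFun ℤ (Fin g ⊕ Fin g)) v = sbasis g v := by
    simp [sbasis, Pi.basisFun_apply]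
  rw [hb]
  exact key v

lemma Psi_congr (g : ℕ) [NeZero g] {n n' : ℤ} {w w' : (Fin g ⊕ Fin g) → ℤ}
    (hn : n = n') (hw : w = w') (p1 p2 p1' p2') :
    Psi g n w p1 p2 = Psi g n' w' p1' p2' := by subst hn; subst hw; rfl

lemma Psi_inv (g : ℕ) [NeZero g] (n w h1 h2) :
    (Psi g n w h1 h2)⁻¹ = Psi g (-n) (-w) (by simp [h1]) (by simp [h2]) := by
  apply inv_eq_of_mul_eq_one_right
  rw [Psi_mul]
  rw [Psi_congr g (n' := 0) (w' := 0)
    (by rw [sform_neg_right, sform_self]; ring) (by abel) _ _ rfl rfl, Psi_one]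

lemma Psi_b0 (g : ℕ) [NeZero g] (n w h1 h2) :
    Psi g n w h1 h2 (sbasis g (Sum.inr 0)) - sbasis g (Sum.inr 0)
      = n • sbasis g (Sum.inl 0) + w := by
  have hsb0 : sform g w (sbasis g (Sum.inr 0)) = 0 := by
    rw [sform_basis_right_inr, h1]
  have hb1 : sbasis g (Sum.inr (0 : Fin g)) (Sum.inr (0 : Fin g)) = 1 := by simp [sbasis]
  rw [Psi_apply]
  funext u
  simp only [PsiFun, hsb0, Pi.sub_apply, Pi.add_apply, Pi.smul_apply, smul_eq_mul, hb1]
  ring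

lemma coord_n (g : ℕ) [NeZero g] (n : ℤ) (w) (h1 : w (Sum.inl 0) = 0) :
    (n • sbasis g (Sum.inl 0) + w) (Sum.inl 0) = n := by
  simp [sbasis, h1]

lemma projV_of (g : ℕ) [NeZero g] (n : ℤ) (w) (h1 : w (Sum.inl 0) = 0)
    (h2 : w (Sum.inr 0) = 0) :
    projV g (n • sbasis g (Sum.inl 0) + w) = w := by
  funext v
  rcases v with k | k <;> by_cases hk : k = 0 <;>
    simp [projV, hk, h1, h2, sbasis, Pi.single_apply]

lemma Psi_n (g : ℕ) [NeZero g] (n w h1 h2) :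
    (Psi g n w h1 h2 (sbasis g (Sum.inr 0)) - sbasis g (Sum.inr 0)) (Sum.inl 0) = n := by
  rw [Psi_b0]; exact coord_n g n w h1

lemma Psi_w (g : ℕ) [NeZero g] (n w h1 h2) :
    projV g (Psi g n w h1 h2 (sbasis g (Sum.inr 0)) - sbasis g (Sum.inr 0)) = w := by
  rw [Psi_b0]; exact projV_of g n w h1 h2

/-- The map `ψ ↦ (a₁-coordinate of ψ(b₁) - b₁, V''-part of ψ(b₁) - b₁)` is a
group isomorphism from `K` onto the Heisenberg-type group `ℤ × V''` with multiplication
`(n₁,w₁)(n₂,w₂) = (n₁+n₂+i(w₁,w₂), w₁+w₂)`, where `V'' = ⟨a₂, b₂, …, a_g, b_g⟩ ≅ ℤ^{2g-2}`. -/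
theorem stmt11 (g : ℕ) [NeZero g] :
    ((1 : ((Fin g ⊕ Fin g) → ℤ) ≃ₗ[ℤ] ((Fin g ⊕ Fin g) → ℤ)) ∈ KsetSp g) ∧
    (∀ ψ ∈ KsetSp g, ψ⁻¹ ∈ KsetSp g) ∧
    (∀ ψ ∈ KsetSp g, ∀ ψ' ∈ KsetSp g, ψ * ψ' ∈ KsetSp g) ∧
    Function.Bijective (fun ψ : KsetSp g =>
      (((ψ : ((Fin g ⊕ Fin g) → ℤ) ≃ₗ[ℤ] ((Fin g ⊕ Fin g) → ℤ)) (sbasis g (Sum.inr 0)) - sbasis g (Sum.inr 0))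
          (Sum.inl 0),
        (⟨projV g ((ψ : ((Fin g ⊕ Fin g) → ℤ) ≃ₗ[ℤ] ((Fin g ⊕ Fin g) → ℤ)) (sbasis g (Sum.inr 0)) -
            sbasis g (Sum.inr 0)), by simp [projV], by simp [projV]⟩ :
          {w : (Fin g ⊕ Fin g) → ℤ // w (Sum.inl 0) = 0 ∧ w (Sum.inr 0) = 0}))) ∧
    (∀ ψ₁ ψ₂ ψ₃ : KsetSp g, (ψ₃ : ((Fin g ⊕ Fin g) → ℤ) ≃ₗ[ℤ] ((Fin g ⊕ Fin g) → ℤ)) = (ψ₁ : ((Fin g ⊕ Fin g) → ℤ) ≃ₗ[ℤ] ((Fin g ⊕ Fin g) → ℤ)) * (ψ₂ : ((Fin g ⊕ Fin g) → ℤ) ≃ₗ[ℤ] ((Fin g ⊕ Fin g) → ℤ)) →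
      (((ψ₃ : ((Fin g ⊕ Fin g) → ℤ) ≃ₗ[ℤ] ((Fin g ⊕ Fin g) → ℤ)) (sbasis g (Sum.inr 0)) - sbasis g (Sum.inr 0))
          (Sum.inl 0) =
        ((ψ₁ : ((Fin g ⊕ Fin g) → ℤ) ≃ₗ[ℤ] ((Fin g ⊕ Fin g) → ℤ)) (sbasis g (Sum.inr 0)) - sbasis g (Sum.inr 0))
            (Sum.inl 0) +
          ((ψ₂ : ((Fin g ⊕ Fin g) → ℤ) ≃ₗ[ℤ] ((Fin g ⊕ Fin g) → ℤ)) (sbasis g (Sum.inr 0)) - sbasis g (Sum.inr 0))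
            (Sum.inl 0) +
          sform g
            (projV g ((ψ₁ : ((Fin g ⊕ Fin g) → ℤ) ≃ₗ[ℤ] ((Fin g ⊕ Fin g) → ℤ)) (sbasis g (Sum.inr 0)) -
              sbasis g (Sum.inr 0)))
            (projV g ((ψ₂ : ((Fin g ⊕ Fin g) → ℤ) ≃ₗ[ℤ] ((Fin g ⊕ Fin g) → ℤ)) (sbasis g (Sum.inr 0)) -
              sbasis g (Sum.inr 0)))) ∧
      projV g ((ψ₃ : ((Fin g ⊕ Fin g) → ℤ) ≃ₗ[ℤ] ((Fin g ⊕ Fin g) → ℤ)) (sbasis g (Sum.inr 0)) -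
          sbasis g (Sum.inr 0)) =
        projV g ((ψ₁ : ((Fin g ⊕ Fin g) → ℤ) ≃ₗ[ℤ] ((Fin g ⊕ Fin g) → ℤ)) (sbasis g (Sum.inr 0)) -
            sbasis g (Sum.inr 0)) +
          projV g ((ψ₂ : ((Fin g ⊕ Fin g) → ℤ) ≃ₗ[ℤ] ((Fin g ⊕ Fin g) → ℤ)) (sbasis g (Sum.inr 0)) -
            sbasis g (Sum.inr 0))) := by
  refine ⟨Psi_one g ▸ Psi_mem g 0 0 rfl rfl, ?_, ?_, ⟨?_, ?_⟩, ?_⟩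
  · intro ψ hψ
    rw [K_eq_Psi g ψ hψ, Psi_inv]
    exact Psi_mem g _ _ _ _
  · intro ψ hψ ψ' hψ'
    rw [K_eq_Psi g ψ hψ, K_eq_Psi g ψ' hψ', Psi_mul]
    exact Psi_mem g _ _ _ _
  · -- injective
    intro ψ ψ' h
    simp only [Prod.mk.injEq, Subtype.mk.injEq] at h
    apply Subtype.ext
    rw [K_eq_Psi g ψ.1 ψ.2, K_eq_Psi g ψ'.1 ψ'.2]
    exact Psi_congr g h.1 h.2 _ _ _ _
  · -- surjective
    rintro ⟨n, ⟨w, hw1, hw2⟩⟩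
    refine ⟨⟨Psi g n w hw1 hw2, Psi_mem g n w hw1 hw2⟩, ?_⟩
    have hb := Psi_b0 g n w hw1 hw2
    simp only
    rw [hb]
    exact Prod.ext (coord_n g n w hw1) (Subtype.ext (projV_of g n w hw1 hw2))
  · intro ψ₁ ψ₂ ψ₃ h
    have e1 := K_eq_Psi g ψ₁.1 ψ₁.2
    have e2 := K_eq_Psi g ψ₂.1 ψ₂.2
    have e3 : (ψ₃ : ((Fin g ⊕ Fin g) → ℤ) ≃ₗ[ℤ] ((Fin g ⊕ Fin g) → ℤ))
        = Psi g
            (((ψ₁ : ((Fin g ⊕ Fin g) → ℤ) ≃ₗ[ℤ] ((Fin g ⊕ Fin g) → ℤ)) (sbasis g (Sum.inr 0)) -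
                sbasis g (Sum.inr 0)) (Sum.inl 0) +
              ((ψ₂ : ((Fin g ⊕ Fin g) → ℤ) ≃ₗ[ℤ] ((Fin g ⊕ Fin g) → ℤ)) (sbasis g (Sum.inr 0)) -
                sbasis g (Sum.inr 0)) (Sum.inl 0) +
              sform g
                (projV g ((ψ₁ : ((Fin g ⊕ Fin g) → ℤ) ≃ₗ[ℤ] ((Fin g ⊕ Fin g) → ℤ))
                    (sbasis g (Sum.inr 0)) - sbasis g (Sum.inr 0)))
                (projV g ((ψ₂ : ((Fin g ⊕ Fin g) → ℤ) ≃ₗ[ℤ] ((Fin g ⊕ Fin g) → ℤ))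
                    (sbasis g (Sum.inr 0)) - sbasis g (Sum.inr 0))))
            (projV g ((ψ₁ : ((Fin g ⊕ Fin g) → ℤ) ≃ₗ[ℤ] ((Fin g ⊕ Fin g) → ℤ))
                (sbasis g (Sum.inr 0)) - sbasis g (Sum.inr 0)) +
              projV g ((ψ₂ : ((Fin g ⊕ Fin g) → ℤ) ≃ₗ[ℤ] ((Fin g ⊕ Fin g) → ℤ))
                (sbasis g (Sum.inr 0)) - sbasis g (Sum.inr 0)))
            (by simp [projV_spec1]) (by simp [projV_spec2]) := by
      conv_lhs => rw [h, e1, e2]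
      rw [Psi_mul]
    exact ⟨by rw [e3, Psi_n], by rw [e3, Psi_w]⟩
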